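/- arXiv:1310.5185 — 2 statements merged into one kernel-verified Lean document; each statement's English description precedes it below -/
import Mathlib

section
/- Let e₀ ∈ ℝ^q be the unit vector with all coordinates 1/√q, let Π₀ = e₀e₀* and Π₁ = I − Π₀. Define Ψ₀ = Π₀ ⊗ e₀* and Ψ₁ = Π₁ ⊗ e₀* + e₀* ⊗ Π₁, both viewed as linear maps from ℝ^q ⊗ ℝ^q to ℝ^q. Then Π₀ ⊗ e₀* = e₀* ⊗ Π₀, ‖Ψ₀‖ = 1, and ‖Ψ₁‖ = √2, where ‖·‖ is the operator norm. -/
open Matrix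

/-- The spectral norm (largest singular value) of a real matrix. -/
noncomputable def specNorm {m n : Type*} [Fintype m] [Fintype n] [DecidableEq n]
    (A : Matrix m n ℝ) : ℝ :=
  ‖LinearMap.toContinuousLinearMap (Matrix.toEuclideanLin A)‖

open Finset in
/-- Characterization of the spectral norm via squared-sum bounds plus a witness vector. -/
lemma specNorm_eq_of {m n : Type*} [Fintype m] [Fintype n] [DecidableEq n]
    (A : Matrix m n ℝ) (c : ℝ) (hc : 0 ≤ c)
    (hub : ∀ x : n → ℝ, ∑ i, (A.mulVec x i)^2 ≤ c^2 * ∑ j, (x j)^2)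
    (x₀ : n → ℝ) (hx₀ : x₀ ≠ 0)
    (hlb : ∑ i, (A.mulVec x₀ i)^2 = c^2 * ∑ j, (x₀ j)^2) :
    specNorm A = c := by
  set T := LinearMap.toContinuousLinearMap (Matrix.toEuclideanLin A) with hT
  have happ : ∀ x : EuclideanSpace ℝ n, ∀ i, T x i = A.mulVec (fun j => x j) i := fun x i => rfl
  have hnx : ∀ x : EuclideanSpace ℝ n, ‖x‖^2 = ∑ j, (x j)^2 := by
    intro x
    rw [PiLp.norm_sq_eq_of_L2]
    exact Finset.sum_congr rfl fun j _ => by rw [Real.norm_eq_abs, sq_abs]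
  have hTx : ∀ x : EuclideanSpace ℝ n, ‖T x‖^2 = ∑ i, (A.mulVec (fun j => x j) i)^2 := by
    intro x
    rw [PiLp.norm_sq_eq_of_L2]
    exact Finset.sum_congr rfl fun i _ => by rw [happ, Real.norm_eq_abs, sq_abs]
  refine le_antisymm (T.opNorm_le_bound hc ?_) ?_
  · intro x
    have h2 : ‖T x‖^2 ≤ (c * ‖x‖)^2 := by
      rw [mul_pow, hTx, hnx]; exact hub _
    calc ‖T x‖ = Real.sqrt (‖T x‖^2) := (Real.sqrt_sq (norm_nonneg _)).symm
      _ ≤ Real.sqrt ((c * ‖x‖)^2) := Real.sqrt_le_sqrt h2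
      _ = c * ‖x‖ := Real.sqrt_sq (by positivity)
  · set y : EuclideanSpace ℝ n := (WithLp.equiv 2 (n → ℝ)).symm x₀ with hy
    have hy0 : y ≠ 0 := by simpa [hy] using hx₀
    have hyn : 0 < ‖y‖ := norm_pos_iff.mpr hy0
    have heq : ‖T y‖ = c * ‖y‖ := by
      have h2 : ‖T y‖^2 = (c * ‖y‖)^2 := by rw [mul_pow, hTx, hnx]; exact hlb
      have := congrArg Real.sqrt h2
      rwa [Real.sqrt_sq (norm_nonneg _), Real.sqrt_sq (by positivity)] at this
    have h3 := T.le_opNorm y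
    rw [heq] at h3
    exact le_of_mul_le_mul_right h3 hyn

open Finset in
/-- With `e₀` the normalized all-ones vector, `P0 = e₀e₀*`, `P1 = I - P0`,
`Ψ₀ = P0 ⊗ e₀*` and `Ψ₁ = P1 ⊗ e₀* + e₀* ⊗ P1` (viewed as maps `ℝ^q ⊗ ℝ^q → ℝ^q`,
i.e. as `q × q²` matrices), one has `P0 ⊗ e₀* = e₀* ⊗ P0`, `‖Ψ₀‖ = 1` and
`‖Ψ₁‖ = √2`. -/
theorem stmt_6 (q : ℕ) (hq : 2 ≤ q)
    (e₀ : Fin q → ℝ) (he₀ : ∀ a, e₀ a = (Real.sqrt q)⁻¹)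
    (P0 P1 : Matrix (Fin q) (Fin q) ℝ)
    (hP0 : ∀ i a, P0 i a = e₀ i * e₀ a) (hP1 : P1 = 1 - P0)
    (Psi0 Psi1 : Matrix (Fin q) (Fin q × Fin q) ℝ)
    (hPsi0 : ∀ i p, Psi0 i p = P0 i p.1 * e₀ p.2)
    (hPsi1 : ∀ i p, Psi1 i p = P1 i p.1 * e₀ p.2 + e₀ p.1 * P1 i p.2) :
    (∀ i p, Psi0 i p = e₀ p.1 * P0 i p.2) ∧
    specNorm Psi0 = 1 ∧ specNorm Psi1 = Real.sqrt 2 := by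
  have hq0 : 0 < (q:ℝ) := by exact_mod_cast Nat.lt_of_lt_of_le Nat.zero_lt_two hq
  set r : ℝ := (Real.sqrt q)⁻¹ with hr
  have hsq : 0 < Real.sqrt q := Real.sqrt_pos.mpr hq0
  have hr0 : 0 < r := inv_pos.mpr hsq
  have hr2 : r^2 = (q:ℝ)⁻¹ := by
    rw [hr, inv_pow, Real.sq_sqrt hq0.le]
  have hqr2 : (q:ℝ) * r^2 = 1 := by rw [hr2]; field_simp
  have hmul : ∀ {α : Type} [Fintype α] (M : Matrix (Fin q) α ℝ) (v : α → ℝ) (i),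
      M.mulVec v i = ∑ j, M i j * v j := fun M v i => rfl
  have hsum_e2 : ∑ a, e₀ a ^ 2 = 1 := by
    simp only [he₀, ← hr]
    rw [Finset.sum_const, card_univ, Fintype.card_fin, nsmul_eq_mul]
    exact hqr2
  have hP1a : ∀ i a, P1 i a = (if i = a then (1:ℝ) else 0) - r^2 := by
    intro i a
    rw [hP1]
    simp [Matrix.sub_apply, Matrix.one_apply, hP0, he₀, ← hr, sq]
  have hP1e : ∀ i, ∑ a, P1 i a * e₀ a = 0 := by
    intro i
    simp only [hP1a, he₀, ← hr, sub_mul, ite_mul, one_mul, zero_mul]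
    rw [Finset.sum_sub_distrib, Finset.sum_ite_eq, Finset.sum_const, card_univ,
      Fintype.card_fin, nsmul_eq_mul]
    simp only [mem_univ, if_true]
    nlinarith [hqr2]
  have hmv1 : ∀ (v : Fin q → ℝ) i, P1.mulVec v i = v i - r^2 * ∑ a, v a := by
    intro v i
    rw [hmul]
    simp only [hP1a, sub_mul, ite_mul, one_mul, zero_mul]
    rw [Finset.sum_sub_distrib, Finset.sum_ite_eq, ← Finset.mul_sum]
    simp
  have hP1norm : ∀ v : Fin q → ℝ,
      ∑ i, (P1.mulVec v i)^2 = ∑ i, (v i)^2 - (∑ a, e₀ a * v a)^2 := by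
    intro v
    have hc : ∑ a, e₀ a * v a = r * ∑ a, v a := by
      simp only [he₀, ← hr]; rw [Finset.mul_sum]
    simp only [hmv1, hc]
    rw [Finset.sum_congr rfl (fun i _ => by ring_nf :
      ∀ i ∈ univ, (v i - r^2 * ∑ a, v a)^2 =
        v i^2 - 2 * r^2 * (∑ a, v a) * v i + r^4 * (∑ a, v a)^2)]
    rw [Finset.sum_add_distrib, Finset.sum_sub_distrib, ← Finset.mul_sum, ← Finset.sum_mul]
    rw [Finset.sum_const, card_univ, Fintype.card_fin, nsmul_eq_mul]
    nlinarith [hqr2, sq_nonneg (∑ a, v a)]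
  have heP1 : ∀ v : Fin q → ℝ, ∑ a, e₀ a * P1.mulVec v a = 0 := by
    intro v
    simp only [hmv1, he₀, ← hr, mul_sub]
    rw [Finset.sum_sub_distrib, ← Finset.mul_sum, Finset.sum_const, card_univ,
      Fintype.card_fin, nsmul_eq_mul]
    linear_combination (-(r * ∑ a : Fin q, v a)) * hqr2
  have hcross : ∀ w : Fin q → ℝ, (∑ a, e₀ a * w a = 0) →
      ∑ p : Fin q × Fin q, (w p.1 * e₀ p.2 + e₀ p.1 * w p.2)^2 = 2 * ∑ a, (w a)^2 := by
    intro w hw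
    rw [Fintype.sum_prod_type]
    have h1 : ∀ a, ∑ b, (w a * e₀ b + e₀ a * w b)^2 =
        w a^2 * (∑ b, e₀ b^2) + (2 * w a * e₀ a) * (∑ b, e₀ b * w b)
          + e₀ a^2 * (∑ b, w b^2) := by
      intro a
      rw [Finset.mul_sum, Finset.mul_sum, Finset.mul_sum, ← Finset.sum_add_distrib,
        ← Finset.sum_add_distrib]
      exact Finset.sum_congr rfl fun b _ => by ring
    rw [Finset.sum_congr rfl fun a _ => h1 a]
    simp only [hsum_e2, hw, mul_zero, mul_one, add_zero]
    rw [Finset.sum_add_distrib, ← Finset.sum_mul]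
    rw [hsum_e2]
    ring
  -- the first conjunct
  refine ⟨fun i p => by rw [hPsi0, hP0, hP0]; ring, ?_, ?_⟩
  -- ‖Ψ₀‖ = 1
  · have hw2 : ∑ p : Fin q × Fin q, (e₀ p.1 * e₀ p.2)^2 = 1 := by
      rw [Fintype.sum_prod_type]
      calc ∑ a, ∑ b, (e₀ a * e₀ b)^2 = ∑ a, e₀ a^2 * ∑ b, e₀ b^2 := by
            refine Finset.sum_congr rfl fun a _ => ?_
            rw [Finset.mul_sum]
            exact Finset.sum_congr rfl fun b _ => by ring
        _ = 1 := by
            rw [hsum_e2]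
            simpa using hsum_e2
    have hT0 : ∀ (x : Fin q × Fin q → ℝ) i,
        Psi0.mulVec x i = e₀ i * ∑ p : Fin q × Fin q, (e₀ p.1 * e₀ p.2) * x p := by
      intro x i
      rw [hmul, Finset.mul_sum]
      refine Finset.sum_congr rfl fun p _ => ?_
      rw [hPsi0, hP0]; ring
    refine specNorm_eq_of _ _ zero_le_one ?_ (fun p => e₀ p.1 * e₀ p.2) ?_ ?_
    · intro x
      have hCS := Finset.sum_mul_sq_le_sq_mul_sq univ (fun p : Fin q × Fin q => e₀ p.1 * e₀ p.2) x
      rw [hw2, one_mul] at hCS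
      calc ∑ i, (Psi0.mulVec x i)^2
          = ∑ i, (e₀ i^2 * (∑ p : Fin q × Fin q, (e₀ p.1 * e₀ p.2) * x p)^2) := by
            refine Finset.sum_congr rfl fun i _ => ?_
            rw [hT0]; ring
        _ = (∑ p : Fin q × Fin q, (e₀ p.1 * e₀ p.2) * x p)^2 := by
            rw [← Finset.sum_mul, hsum_e2, one_mul]
        _ ≤ ∑ p : Fin q × Fin q, (x p)^2 := hCS
        _ = 1^2 * ∑ p : Fin q × Fin q, (x p)^2 := by ring
    · intro h
      have h0 : (0:ℝ) < r * r := mul_pos hr0 hr0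
      have := congrFun h (⟨0, by omega⟩, ⟨0, by omega⟩)
      simp only [Pi.zero_apply, he₀, ← hr] at this
      exact absurd this (ne_of_gt h0)
    · have hC : ∑ p : Fin q × Fin q, (e₀ p.1 * e₀ p.2) * (e₀ p.1 * e₀ p.2) = 1 := by
        rw [← hw2]
        exact Finset.sum_congr rfl fun p _ => (sq _).symm
      calc ∑ i, (Psi0.mulVec (fun p => e₀ p.1 * e₀ p.2) i)^2
          = ∑ i, e₀ i ^2 := by
            refine Finset.sum_congr rfl fun i _ => ?_
            rw [hT0, hC, mul_one]
        _ = 1^2 * ∑ p : Fin q × Fin q, (e₀ p.1 * e₀ p.2)^2 := by rw [hsum_e2, hw2]; norm_num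
  -- ‖Ψ₁‖ = √2
  · have hsqrt2 : (Real.sqrt 2)^2 = 2 := Real.sq_sqrt (by norm_num)
    have hP1symm : ∀ i a, P1 i a = P1 a i := by
      intro i a
      rw [hP1a, hP1a]
      rcases eq_or_ne i a with h | h
      · rw [h]
      · rw [if_neg h, if_neg (Ne.symm h)]
    have hSadj : ∀ (v : Fin q → ℝ) (p : Fin q × Fin q),
        ∑ i, Psi1 i p * v i = P1.mulVec v p.1 * e₀ p.2 + e₀ p.1 * P1.mulVec v p.2 := by
      intro v p
      calc ∑ i, Psi1 i p * v i
          = ∑ i, (e₀ p.2 * (P1 p.1 i * v i) + e₀ p.1 * (P1 p.2 i * v i)) := by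
            refine Finset.sum_congr rfl fun i _ => ?_
            rw [hPsi1, hP1symm i p.1, hP1symm i p.2]; ring
        _ = e₀ p.2 * (∑ i, P1 p.1 i * v i) + e₀ p.1 * (∑ i, P1 p.2 i * v i) := by
            rw [Finset.sum_add_distrib, ← Finset.mul_sum, ← Finset.mul_sum]
        _ = P1.mulVec v p.1 * e₀ p.2 + e₀ p.1 * P1.mulVec v p.2 := by
            rw [← hmul, ← hmul]; ring
    -- witness data
    set i0 : Fin q := ⟨0, by omega⟩ with hi0
    set i1 : Fin q := ⟨1, by omega⟩ with hi1
    have hne : i0 ≠ i1 := by simp [hi0, hi1, Fin.ext_iff]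
    set u : Fin q → ℝ := fun i => (if i = i0 then 1 else 0) - (if i = i1 then 1 else 0)
      with hu
    have hsu : ∑ a, u a = 0 := by
      simp [hu, Finset.sum_sub_distrib]
    have heu : ∑ a, e₀ a * u a = 0 := by
      simp only [he₀, ← hr]
      rw [← Finset.mul_sum, hsu, mul_zero]
    have hu2 : ∑ a, (u a)^2 = 2 := by
      have h1 : ∀ a, (u a)^2 = (if a = i0 then (1:ℝ) else 0) + (if a = i1 then 1 else 0) := by
        intro a
        rcases eq_or_ne a i0 with h0 | h0
        · subst h0; simp [hu, hne]
        · rcases eq_or_ne a i1 with h1 | h1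
          · simp [hu, h0, h1, hne.symm]
          · simp [hu, h0, h1]
      rw [Finset.sum_congr rfl fun a _ => h1 a, Finset.sum_add_distrib]
      simp only [Finset.sum_ite_eq', Finset.mem_univ, if_true]
      norm_num
    have hP1u : ∀ i, P1.mulVec u i = u i := fun i => by rw [hmv1, hsu]; ring
    set x₁ : Fin q × Fin q → ℝ := fun p => u p.1 * e₀ p.2 + e₀ p.1 * u p.2 with hx₁def
    have hx₁2 : ∑ p : Fin q × Fin q, (x₁ p)^2 = 4 := by
      simp only [hx₁def]
      rw [hcross u heu, hu2]
      norm_num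
    have hT1 : ∀ i, Psi1.mulVec x₁ i = 2 * u i := by
      intro i
      rw [hmul, Fintype.sum_prod_type]
      have hin : ∀ a, ∑ b, Psi1 i (a, b) * x₁ (a, b)
          = P1 i a * u a * (∑ b, e₀ b^2) + (P1 i a * e₀ a) * (∑ b, e₀ b * u b)
            + (e₀ a * u a) * (∑ b, P1 i b * e₀ b) + e₀ a^2 * (∑ b, P1 i b * u b) := by
        intro a
        rw [Finset.mul_sum, Finset.mul_sum, Finset.mul_sum, Finset.mul_sum,
          ← Finset.sum_add_distrib, ← Finset.sum_add_distrib, ← Finset.sum_add_distrib]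
        refine Finset.sum_congr rfl fun b _ => ?_
        simp only [hx₁def, hPsi1]
        ring
      have hPu : ∑ b, P1 i b * u b = u i := by rw [← hmul]; exact hP1u i
      rw [Finset.sum_congr rfl fun a _ => hin a]
      simp only [hsum_e2, heu, hP1e, hPu, mul_zero, mul_one, add_zero, zero_add]
      rw [Finset.sum_add_distrib, ← Finset.sum_mul, hsum_e2]
      have hs : ∑ a, P1 i a * u a = u i := by rw [← hmul]; exact hP1u i
      rw [hs]; ring
    refine specNorm_eq_of _ _ (Real.sqrt_nonneg 2) ?_ x₁ ?_ ?_
    · -- upper bound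
      intro x
      set v : Fin q → ℝ := Psi1.mulVec x with hv
      set L : ℝ := ∑ i, (v i)^2 with hLdef
      have hL0 : 0 ≤ L := Finset.sum_nonneg fun i _ => sq_nonneg _
      have hX0 : 0 ≤ ∑ p : Fin q × Fin q, (x p)^2 :=
        Finset.sum_nonneg fun p _ => sq_nonneg _
      have hfub : L = ∑ p : Fin q × Fin q,
          x p * (P1.mulVec v p.1 * e₀ p.2 + e₀ p.1 * P1.mulVec v p.2) := by
        calc L = ∑ i, (∑ p : Fin q × Fin q, Psi1 i p * x p) * v i := by
              rw [hLdef]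
              exact Finset.sum_congr rfl fun i _ => by rw [sq, hv, hmul]
          _ = ∑ i, ∑ p : Fin q × Fin q, Psi1 i p * x p * v i :=
              Finset.sum_congr rfl fun i _ => Finset.sum_mul _ _ _
          _ = ∑ p : Fin q × Fin q, ∑ i, Psi1 i p * x p * v i := Finset.sum_comm
          _ = ∑ p : Fin q × Fin q, x p * ∑ i, Psi1 i p * v i := by
              refine Finset.sum_congr rfl fun p _ => ?_
              rw [Finset.mul_sum]
              exact Finset.sum_congr rfl fun i _ => by ring
          _ = _ := Finset.sum_congr rfl fun p _ => by rw [hSadj]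
      have hS2 : ∑ p : Fin q × Fin q,
          (P1.mulVec v p.1 * e₀ p.2 + e₀ p.1 * P1.mulVec v p.2)^2
            = 2 * ∑ i, (P1.mulVec v i)^2 := hcross _ (heP1 v)
      have hP1le : ∑ i, (P1.mulVec v i)^2 ≤ L := by
        rw [hP1norm, hLdef]
        linarith [sq_nonneg (∑ a, e₀ a * v a)]
      have hCS := Finset.sum_mul_sq_le_sq_mul_sq univ x
        (fun p : Fin q × Fin q => P1.mulVec v p.1 * e₀ p.2 + e₀ p.1 * P1.mulVec v p.2)
      rw [← hfub, hS2] at hCS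
      have hkey : L^2 ≤ (∑ p : Fin q × Fin q, (x p)^2) * (2 * L) := by
        calc L^2 ≤ (∑ p : Fin q × Fin q, (x p)^2) * (2 * ∑ i, (P1.mulVec v i)^2) := hCS
          _ ≤ (∑ p : Fin q × Fin q, (x p)^2) * (2 * L) :=
              mul_le_mul_of_nonneg_left (by linarith [hP1le]) hX0
      rw [hsqrt2]
      rcases eq_or_lt_of_le hL0 with h | h
      · rw [← h]
        positivity
      · have h2 : L * L ≤ (2 * ∑ p : Fin q × Fin q, (x p)^2) * L := by
          calc L * L = L^2 := (sq L).symm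
            _ ≤ (∑ p : Fin q × Fin q, (x p)^2) * (2 * L) := hkey
            _ = (2 * ∑ p : Fin q × Fin q, (x p)^2) * L := by ring
        exact le_of_mul_le_mul_right h2 h
    · -- x₁ ≠ 0
      intro h
      have h00 := congrFun h (i0, i0)
      have hui0 : u i0 = 1 := by simp [hu, hne]
      simp only [hx₁def, Pi.zero_apply, hui0, he₀, ← hr] at h00
      nlinarith [hr0, h00]
    · -- the witness realizes the norm
      calc ∑ i, (Psi1.mulVec x₁ i)^2 = ∑ i, 4 * (u i)^2 :=
            Finset.sum_congr rfl fun i _ => by rw [hT1]; ring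
        _ = 4 * 2 := by rw [← Finset.mul_sum, hu2]
        _ = (Real.sqrt 2)^2 * ∑ p : Fin q × Fin q, (x₁ p)^2 := by
            rw [hsqrt2, hx₁2]; norm_num
end

section
/- Let V be the 2-dimensional real inner product space with orthonormal basis (b, c), and let R be the reflection matrix R = [[−1/d, √(1−1/d²)], [√(1−1/d²), 1/d]] for a real d ≥ 2. Suppose γ, γ' ∈ [0,1] and the 2×2 symmetric matrix M = [[(1−γ)γ', √(γ(1−γ)γ')],[√(γ(1−γ)γ'), γ]] satisfies RM = M. Then γ ≠ 1, and γ' = (d−1)/((d+1)(1/γ − 1)) when γ ∈ (0,1). -/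
open Matrix

theorem stmt_17 (d γ γ' : ℝ) (hd : 2 ≤ d)
    (hγ : γ ∈ Set.Icc (0 : ℝ) 1) (hγ' : γ' ∈ Set.Icc (0 : ℝ) 1)
    (R M : Matrix (Fin 2) (Fin 2) ℝ)
    (hR : R = !![-1/d, Real.sqrt (1 - 1/d^2); Real.sqrt (1 - 1/d^2), 1/d])
    (hM : M = !![(1-γ)*γ', Real.sqrt (γ*(1-γ)*γ');
                 Real.sqrt (γ*(1-γ)*γ'), γ])
    (hRM : R * M = M) :
    γ ≠ 1 ∧ (0 < γ → γ < 1 → γ' = (d - 1) / ((d + 1) * (1/γ - 1))) := by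
  subst hR hM
  have hd0 : (0:ℝ) < d := by linarith
  have h00 := congrFun (congrFun hRM 0) 0
  have h11 := congrFun (congrFun hRM 1) 1
  simp [Matrix.mul_apply, Fin.sum_univ_two] at h00 h11
  have e : (1-γ)*γ' + 1/d*((1-γ)*γ') = γ - 1/d*γ := by linear_combination h11 - h00
  have key : (1-γ)*γ'*(d+1) = γ*(d-1) := by
    field_simp at e
    nlinarith [e]
  constructor
  · intro h
    rw [h] at key
    have : d = 1 := by linarith
    linarith
  · intro h0 h1
    have hg : γ ≠ 0 := ne_of_gt h0
    have hne : (d + 1) * (1/γ - 1) ≠ 0 := by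
      have : 1/γ - 1 > 0 := by
        rw [gt_iff_lt, sub_pos, lt_div_iff₀ h0]; linarith
      positivity
    rw [eq_div_iff hne]
    field_simp
    nlinarith [key]
end
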